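/- For any p > 0 there exists a constant c_p > 0 such that for all 0 < τ < 1 and all complex numbers v, w: |(e^{-iτλ|v|^p} v - v)/τ - (e^{-iτλ|w|^p} w - w)/τ| ≤ c_p |v - w| (|v|^p + |w|^p), where λ ∈ {-1, 1}. -/

import Mathlib

open Complex

/-- The nonlinear flow `N(τ)v = exp(-iτλ|v|^p) v`. -/
noncomputable def Nflow (lam p τ : ℝ) (v : ℂ) : ℂ :=
  Complex.exp (-Complex.I * τ * lam * ((‖v‖ ^ p : ℝ) : ℂ)) * v

/-!
The flow only rotates `v` by the phase `θ(v) = -τλ|v|^p`, so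
`N(τ)v - v - (N(τ)w - w) = (e^{iθ(v)} - 1)(v - w) + (e^{iθ(v)} - e^{iθ(w)}) w`.
Since `|e^{ix} - e^{iy}| ≤ |x - y|`, for `|w| ≤ |v|` the first term is at most `τ|v|^p |v - w|`
and the second at most `τ(|v|^p - |w|^p)|w|`; the elementary inequality
`(a^p - b^p) b ≤ max p 1 · a^p (a - b)` for `0 ≤ b ≤ a` bounds the latter by
`τ max p 1 · |v|^p |v - w|`.
-/

theorem norm_exp_I_mul_ofReal_sub_exp_I_mul_ofReal_le (x y : ℝ) :
    ‖exp (I * x) - exp (I * y)‖ ≤ |x - y| := by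
  have h : exp (I * x) - exp (I * y) = exp (I * y) * (exp (I * ↑(x - y)) - 1) := by
    rw [mul_sub, ← exp_add, mul_one]
    push_cast
    ring_nf
  rw [h, norm_mul, norm_exp_I_mul_ofReal, one_mul]
  exact Real.norm_exp_I_mul_ofReal_sub_one_le

theorem norm_phase_rotation_sub_le (θ φ : ℝ) (v w : ℂ) :
    ‖(exp (I * θ) * v - v) - (exp (I * φ) * w - w)‖ ≤ |θ| * ‖v - w‖ + |θ - φ| * ‖w‖ := by
  have h : (exp (I * θ) * v - v) - (exp (I * φ) * w - w)
      = (exp (I * θ) - 1) * (v - w) + (exp (I * θ) - exp (I * φ)) * w := by ring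
  rw [h]
  refine (norm_add_le _ _).trans ?_
  rw [norm_mul, norm_mul]
  have h₁ : ‖exp (I * θ) - 1‖ ≤ |θ| := Real.norm_exp_I_mul_ofReal_sub_one_le
  gcongr
  exact norm_exp_I_mul_ofReal_sub_exp_I_mul_ofReal_le θ φ

theorem Real.one_sub_rpow_le_max_mul {p t : ℝ} (hp : 0 ≤ p) (ht₀ : 0 ≤ t) (ht₁ : t ≤ 1) :
    1 - t ^ p ≤ max p 1 * (1 - t) := by
  rcases le_total 1 p with hp₁ | hp₁
  · have h := one_add_mul_self_le_rpow_one_add (s := t - 1) (by linarith) hp₁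
    rw [add_sub_cancel] at h
    rw [max_eq_left hp₁]
    linarith
  · have h : t ^ (1 : ℝ) ≤ t ^ p := Real.rpow_le_rpow_of_exponent_ge' ht₀ ht₁ hp hp₁
    rw [Real.rpow_one] at h
    rw [max_eq_right hp₁]
    linarith

theorem Real.rpow_sub_rpow_mul_le {p a b : ℝ} (hp : 0 ≤ p) (hb : 0 ≤ b) (hba : b ≤ a) :
    (a ^ p - b ^ p) * b ≤ max p 1 * a ^ p * (a - b) := by
  rcases (hb.trans hba).eq_or_lt with rfl | ha
  · simp [le_antisymm hba hb]
  set t := b / a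
  have hbt : b = t * a := (div_mul_cancel₀ b ha.ne').symm
  have hbp : b ^ p = t ^ p * a ^ p := by rw [hbt, Real.mul_rpow (by positivity) ha.le]
  have hcore := Real.one_sub_rpow_le_max_mul hp (by positivity) ((div_le_one ha).mpr hba)
  have hpow : b ^ p ≤ a ^ p := Real.rpow_le_rpow hb hba hp
  calc (a ^ p - b ^ p) * b ≤ (a ^ p - b ^ p) * a := by gcongr
    _ = a ^ p * a * (1 - t ^ p) := by rw [hbp]; ring
    _ ≤ a ^ p * a * (max p 1 * (1 - t)) := by gcongr
    _ = max p 1 * a ^ p * (a - b) := by rw [hbt]; ring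

theorem Nflow_eq (lam p τ : ℝ) (v : ℂ) :
    Nflow lam p τ v = exp (I * ↑(-(τ * lam * ‖v‖ ^ p))) * v := by
  unfold Nflow
  push_cast
  ring_nf

theorem norm_Nflow_sub_sub_le_of_norm_le {lam p τ : ℝ} (hp : 0 ≤ p) (hlam : |lam| ≤ 1)
    (hτ : 0 < τ) {v w : ℂ} (hwv : ‖w‖ ≤ ‖v‖) :
    ‖(Nflow lam p τ v - v) / τ - (Nflow lam p τ w - w) / τ‖
      ≤ (1 + max p 1) * ‖v - w‖ * (‖v‖ ^ p + ‖w‖ ^ p) := by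
  set a := ‖v‖
  set b := ‖w‖
  have hbp : 0 ≤ b ^ p := Real.rpow_nonneg (norm_nonneg w) p
  have hpow : b ^ p ≤ a ^ p := Real.rpow_le_rpow (norm_nonneg w) hwv hp
  have hθ : |-(τ * lam * a ^ p)| ≤ τ * a ^ p := by
    rw [abs_neg, abs_mul, abs_mul, abs_of_pos hτ, abs_of_nonneg (hbp.trans hpow)]
    nlinarith [mul_nonneg (sub_nonneg.mpr hlam) (mul_nonneg hτ.le (hbp.trans hpow))]
  have hθφ : |-(τ * lam * a ^ p) - -(τ * lam * b ^ p)| ≤ τ * (a ^ p - b ^ p) := by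
    rw [show -(τ * lam * a ^ p) - -(τ * lam * b ^ p) = -(τ * lam * (a ^ p - b ^ p)) by ring,
      abs_neg, abs_mul, abs_mul, abs_of_pos hτ, abs_of_nonneg (sub_nonneg.mpr hpow)]
    nlinarith [mul_nonneg (sub_nonneg.mpr hlam) (mul_nonneg hτ.le (sub_nonneg.mpr hpow))]
  have hab : a - b ≤ ‖v - w‖ := norm_sub_norm_le v w
  have hmax : 1 ≤ max p 1 := le_max_right p 1
  rw [← sub_div, norm_div, norm_real, Real.norm_of_nonneg hτ.le, div_le_iff₀ hτ,
    Nflow_eq, Nflow_eq]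
  calc _ ≤ |-(τ * lam * a ^ p)| * ‖v - w‖ + |-(τ * lam * a ^ p) - -(τ * lam * b ^ p)| * b :=
        norm_phase_rotation_sub_le _ _ v w
    _ ≤ τ * a ^ p * ‖v - w‖ + τ * ((a ^ p - b ^ p) * b) := by
        rw [← mul_assoc]; gcongr
    _ ≤ τ * a ^ p * ‖v - w‖ + τ * (max p 1 * a ^ p * ‖v - w‖) := by
        gcongr τ * a ^ p * ‖v - w‖ + τ * ?_
        exact (Real.rpow_sub_rpow_mul_le hp (norm_nonneg w) hwv).trans (by gcongr)
    _ ≤ (1 + max p 1) * ‖v - w‖ * (a ^ p + b ^ p) * τ := by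
        have : 0 ≤ (1 + max p 1) * ‖v - w‖ * b ^ p * τ := by positivity
        nlinarith

/-- Lipschitz-type bound for the nonlinear flow (Mean Value Theorem estimate). -/
theorem stmt_0 (p : ℝ) (hp : 0 < p) :
    ∃ c : ℝ, 0 < c ∧ ∀ lam : ℝ, (lam = -1 ∨ lam = 1) →
      ∀ τ : ℝ, 0 < τ → τ < 1 → ∀ v w : ℂ,
        ‖(Nflow lam p τ v - v) / τ - (Nflow lam p τ w - w) / τ‖
          ≤ c * ‖v - w‖ * (‖v‖ ^ p + ‖w‖ ^ p) := by
  refine ⟨1 + max p 1, by positivity, fun lam hlam τ hτ _ v w => ?_⟩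
  have hlam' : |lam| ≤ 1 := by rcases hlam with rfl | rfl <;> norm_num
  rcases le_total ‖w‖ ‖v‖ with hwv | hvw
  · exact norm_Nflow_sub_sub_le_of_norm_le hp.le hlam' hτ hwv
  · rw [norm_sub_rev, norm_sub_rev v, add_comm (‖v‖ ^ p)]
    exact norm_Nflow_sub_sub_le_of_norm_le hp.le hlam' hτ hvw
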